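/- arXiv:2510.20530 — 2 statements merged into one kernel-verified Lean document; each statement's English description precedes it below -/
import Mathlib

section
/- Fix an integer d ≥ 2 and a unit vector ψ ∈ ℂ^d, and set Q := (|ψ⟩⟨ψ|)ᵀ = |ψ̄⟩⟨ψ̄|. Define the performance operator on ℂ^d_I ⊗ ℂ^d_O ⊗ ℂ^d_F by Ω := (1/(2 d_S)) · (1_d + Q)_I ⊗ P^S_{OF} + (1/(2 d_A)) · (1_d − Q)_I ⊗ P^A_{OF}, where 1_d + Q and 1_d − Q act on the factor I and P^S, P^A act on the factors O, F. Then the maximum of Tr(S Ω) over all single-call deterministic superchannels S equals 1 if d = 2 and equals 2/(d+1) if d > 2, and it is attained. This quantity is the optimal average fidelity of a deterministic single-call protocol transforming an arbitrary unknown U ∈ SU(d) into the state U̅|ψ⟩⟨ψ|Uᵀ on the known pure state ψ. -/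
open Matrix Kronecker BigOperators ComplexOrder

noncomputable section

/-- Entrywise complex conjugate `U̅` of a matrix. -/
def mconj {d : ℕ} (U : Matrix (Fin d) (Fin d) ℂ) : Matrix (Fin d) (Fin d) ℂ :=
  U.map (starRingEnd ℂ)

/-- Rank-one outer product `|v⟩⟨v|`. -/
def outer {n : Type*} (v : n → ℂ) : Matrix n n ℂ :=
  Matrix.vecMulVec v (star v)

/-- Choi vector `|U⟩⟩ = Σ_i e_i ⊗ U e_i`. -/
def choiVec {d : ℕ} (U : Matrix (Fin d) (Fin d) ℂ) : Fin d × Fin d → ℂ :=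
  fun p => U p.2 p.1

/-- `|U⟩⟩⟨⟨U|`. -/
def choiProj {d : ℕ} (U : Matrix (Fin d) (Fin d) ℂ) :
    Matrix (Fin d × Fin d) (Fin d × Fin d) ℂ :=
  outer (choiVec U)

/-- Partial trace over the first tensor factor. -/
def ptrLeft {α β : Type*} [Fintype α] (S : Matrix (α × β) (α × β) ℂ) :
    Matrix β β ℂ :=
  fun b b' => ∑ a, S (a, b) (a, b')

/-- Partial trace over the second (last) tensor factor. -/
def ptrRight {α β : Type*} [Fintype β] (S : Matrix (α × β) (α × β) ℂ) :
    Matrix α α ℂ :=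
  fun a a' => ∑ b, S (a, b) (a', b)

/-- Action `S ⋆ U := Tr_{IO}[ S · (|U̅⟩⟩⟨⟨U̅|_{IO} ⊗ 1_F) ]` of a single-call
supermap `S` on `I ⊗ O ⊗ F` applied to the unitary channel given by `U`. -/
def act {d dF : ℕ}
    (S : Matrix ((Fin d × Fin d) × Fin dF) ((Fin d × Fin d) × Fin dF) ℂ)
    (U : Matrix (Fin d) (Fin d) ℂ) : Matrix (Fin dF) (Fin dF) ℂ :=
  ptrLeft (S * (choiProj (mconj U) ⊗ₖ (1 : Matrix (Fin dF) (Fin dF) ℂ)))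

/-- A single-call deterministic superchannel (channels-to-states):
`S ≥ 0` with `Tr_F(S) = σ ⊗ 1_d`, `σ ≥ 0`, `Tr σ = 1`. -/
def IsSuperchannel {d dF : ℕ}
    (S : Matrix ((Fin d × Fin d) × Fin dF) ((Fin d × Fin d) × Fin dF) ℂ) : Prop :=
  S.PosSemidef ∧
    ∃ σ : Matrix (Fin d) (Fin d) ℂ, σ.PosSemidef ∧ σ.trace = 1 ∧
      ptrRight S = σ ⊗ₖ (1 : Matrix (Fin d) (Fin d) ℂ)

/-- The flip (SWAP) operator on `ℂ^d ⊗ ℂ^d`. -/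
def swapMat (d : ℕ) : Matrix (Fin d × Fin d) (Fin d × Fin d) ℂ :=
  fun x y => if x.1 = y.2 ∧ x.2 = y.1 then 1 else 0

/-- Projector onto the symmetric subspace, `P^S = (1 + SWAP)/2`. -/
def Psym (d : ℕ) : Matrix (Fin d × Fin d) (Fin d × Fin d) ℂ :=
  (2 : ℂ)⁻¹ • ((1 : Matrix (Fin d × Fin d) (Fin d × Fin d) ℂ) + swapMat d)

/-- Projector onto the antisymmetric subspace, `P^A = (1 − SWAP)/2`. -/
def Pasym (d : ℕ) : Matrix (Fin d × Fin d) (Fin d × Fin d) ℂ :=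
  (2 : ℂ)⁻¹ • ((1 : Matrix (Fin d × Fin d) (Fin d × Fin d) ℂ) - swapMat d)

/-- The performance operator
`Ω = (1/(2 d_S))·(1 + Q)_I ⊗ P^S_{OF} + (1/(2 d_A))·(1 − Q)_I ⊗ P^A_{OF}` with
`Q = (|ψ⟩⟨ψ|)ᵀ`, `d_S = d(d+1)/2`, `d_A = d(d−1)/2`, written on the index order
`(I × O) × F`. -/
def OmegaConj {d : ℕ} (ψ : Fin d → ℂ) :
    Matrix ((Fin d × Fin d) × Fin d) ((Fin d × Fin d) × Fin d) ℂ :=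
  fun x y =>
    (2 * ((d : ℂ) * ((d : ℂ) + 1) / 2))⁻¹ *
        ((1 : Matrix (Fin d) (Fin d) ℂ) + (outer ψ)ᵀ) x.1.1 y.1.1 *
        Psym d (x.1.2, x.2) (y.1.2, y.2)
    + (2 * ((d : ℂ) * ((d : ℂ) - 1) / 2))⁻¹ *
        ((1 : Matrix (Fin d) (Fin d) ℂ) - (outer ψ)ᵀ) x.1.1 y.1.1 *
        Pasym d (x.1.2, x.2) (y.1.2, y.2)

/-!
Write `Q = (|ψ⟩⟨ψ|)ᵀ`, `a = 1/(d(d+1))`, `b = 1/(d(d-1))`, so that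
`Ω = a (1 + Q) ⊗ P^S + b (1 - Q) ⊗ P^A`. The upper bound is weak duality: for
`X = 2a Q + b (1 - Q)` the operator `X ⊗ 1_{OF} - Ω = (b - a)(1 - Q) ⊗ P^S + 2a Q ⊗ P^A` is
positive, so for a superchannel with `Tr_F S = σ ⊗ 1` and `t = Tr(σ Q) ∈ [0, 1]`,
`Tr(S Ω) ≤ Tr(S (X ⊗ 1)) = d Tr(σ X) = (2/(d+1)) t + (1/(d-1)) (1 - t) ≤ max (2/(d+1)) (1/(d-1))`.
Both values are attained by product superchannels `ρ ⊗ |V⟩⟩⟨⟨V|`: `ρ = Q` with `V = 1`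
(symmetric Choi vector) gives `2/(d+1)`; for `d = 2`, `ρ = |χ⟩⟨χ|` with `χ ⊥ ψ̄` and
`V = !![0, -1; 1, 0]` (antisymmetric Choi vector) gives `1/(d-1) = 1`.
-/

lemma trace_mul_kronecker_one {α β : Type*} [Fintype α] [Fintype β] [DecidableEq β]
    (S : Matrix (α × β) (α × β) ℂ) (M : Matrix α α ℂ) :
    (S * (M ⊗ₖ (1 : Matrix β β ℂ))).trace = (ptrRight S * M).trace := by
  simp only [trace, diag, mul_apply, Fintype.sum_prod_type, kroneckerMap_apply, one_apply,
    mul_ite, mul_one, mul_zero, Finset.sum_ite_eq', Finset.mem_univ, if_true, ptrRight,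
    Finset.sum_mul]
  exact Finset.sum_congr rfl fun _ _ => Finset.sum_comm

section KronAssoc

variable {α β γ : Type*}

/-- `ρ_I ⊗ K_{OF}` on the index order `(I × O) × F`. -/
def kronAssoc (ρ : Matrix α α ℂ) (K : Matrix (β × γ) (β × γ) ℂ) :
    Matrix ((α × β) × γ) ((α × β) × γ) ℂ :=
  (ρ ⊗ₖ K).submatrix (Equiv.prodAssoc α β γ) (Equiv.prodAssoc α β γ)

@[simp]
lemma kronAssoc_apply (ρ : Matrix α α ℂ) (K : Matrix (β × γ) (β × γ) ℂ) (x y : (α × β) × γ) :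
    kronAssoc ρ K x y = ρ x.1.1 y.1.1 * K (x.1.2, x.2) (y.1.2, y.2) := rfl

lemma kronAssoc_mul [Fintype α] [Fintype β] [Fintype γ] (ρ ρ' : Matrix α α ℂ)
    (K K' : Matrix (β × γ) (β × γ) ℂ) :
    kronAssoc ρ K * kronAssoc ρ' K' = kronAssoc (ρ * ρ') (K * K') := by
  rw [kronAssoc, kronAssoc, submatrix_mul_equiv, ← mul_kronecker_mul, kronAssoc]

lemma trace_kronAssoc [Fintype α] [Fintype β] [Fintype γ] (ρ : Matrix α α ℂ)
    (K : Matrix (β × γ) (β × γ) ℂ) :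
    (kronAssoc ρ K).trace = ρ.trace * K.trace := by
  rw [← trace_kronecker]
  exact Fintype.sum_equiv (Equiv.prodAssoc α β γ) _ _ fun _ => rfl

lemma Matrix.PosSemidef.kronAssoc [Finite α] [Finite β] [Finite γ] {ρ : Matrix α α ℂ}
    {K : Matrix (β × γ) (β × γ) ℂ} (hρ : ρ.PosSemidef) (hK : K.PosSemidef) :
    (_root_.kronAssoc ρ K).PosSemidef :=
  (hρ.kronecker hK).submatrix _

lemma ptrRight_kronAssoc [Fintype γ] (ρ : Matrix α α ℂ) (K : Matrix (β × γ) (β × γ) ℂ) :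
    ptrRight (kronAssoc ρ K) = ρ ⊗ₖ ptrRight K := by
  ext x y
  simp [ptrRight, Finset.mul_sum]

lemma kronAssoc_one [DecidableEq β] [DecidableEq γ] (X : Matrix α α ℂ) :
    kronAssoc X 1 = (X ⊗ₖ (1 : Matrix β β ℂ)) ⊗ₖ (1 : Matrix γ γ ℂ) := by
  ext x y
  simp only [kronAssoc_apply, kroneckerMap_apply, one_apply, Prod.ext_iff]
  split_ifs <;> simp_all

lemma trace_mul_kronAssoc_one [Fintype α] [Fintype β] [Fintype γ] [DecidableEq β] [DecidableEq γ]
    {S : Matrix ((α × β) × γ) ((α × β) × γ) ℂ} {σ : Matrix α α ℂ}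
    (hS : ptrRight S = σ ⊗ₖ (1 : Matrix β β ℂ)) (X : Matrix α α ℂ) :
    (S * kronAssoc X 1).trace = (σ * X).trace * Fintype.card β := by
  rw [kronAssoc_one, trace_mul_kronecker_one, hS, ← mul_kronecker_mul, trace_kronecker, one_mul,
    trace_one]

end KronAssoc

section Positivity

variable {n : Type*} [Fintype n]

open scoped MatrixOrder

lemma Matrix.PosSemidef.trace_mul_nonneg [DecidableEq n] {A B : Matrix n n ℂ}
    (hA : A.PosSemidef) (hB : B.PosSemidef) : 0 ≤ (A * B).trace := by
  obtain ⟨C, rfl⟩ := CStarAlgebra.nonneg_iff_eq_star_mul_self.mp hB.nonneg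
  rw [← mul_assoc, trace_mul_cycle]
  exact (hA.mul_mul_conjTranspose_same C).trace_nonneg

lemma Matrix.PosSemidef.trace_mul_le_trace_mul [DecidableEq n] {S A B : Matrix n n ℂ}
    (hS : S.PosSemidef) (hAB : (B - A).PosSemidef) : (S * A).trace ≤ (S * B).trace := by
  simpa [mul_sub, trace_sub] using hS.trace_mul_nonneg hAB

lemma IsStarProjection.posSemidef {P : Matrix n n ℂ} (hP : IsStarProjection P) :
    P.PosSemidef :=
  nonneg_iff_posSemidef.mp hP.nonneg

lemma IsStarProjection.transpose {P : Matrix n n ℂ} (hP : IsStarProjection P) :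
    IsStarProjection Pᵀ where
  isIdempotentElem := by rw [IsIdempotentElem, ← transpose_mul, hP.isIdempotentElem.eq]
  isSelfAdjoint := IsHermitian.transpose hP.isSelfAdjoint

lemma isStarProjection_outer {v : n → ℂ} (hv : star v ⬝ᵥ v = 1) : IsStarProjection (outer v) where
  isIdempotentElem := by rw [IsIdempotentElem, outer, vecMulVec_mul_vecMulVec, hv, one_smul]
  isSelfAdjoint := by simp [outer, IsSelfAdjoint, star_eq_conjTranspose, conjTranspose_vecMulVec]

lemma trace_outer (v : n → ℂ) : (outer v).trace = star v ⬝ᵥ v := by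
  rw [outer, trace_vecMulVec, dotProduct_comm]

end Positivity

section Symmetrizers

variable {d : ℕ}

lemma isSelfAdjoint_swapMat : IsSelfAdjoint (swapMat d) := by
  ext x y
  simp only [star_eq_conjTranspose, conjTranspose_apply, swapMat]
  split_ifs <;> simp_all

lemma swapMat_mul_self : swapMat d * swapMat d = 1 := by
  ext x y
  simp [mul_apply, Fintype.sum_prod_type, swapMat, ite_and, one_apply, Prod.ext_iff, eq_comm]

lemma isStarProjection_Psym : IsStarProjection (Psym d) where
  isIdempotentElem := by
    simp only [IsIdempotentElem, Psym, smul_mul_smul_comm, add_mul, mul_add, one_mul, mul_one,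
      swapMat_mul_self]
    module
  isSelfAdjoint := by
    simp [Psym, IsSelfAdjoint, star_smul, star_add, isSelfAdjoint_swapMat.star_eq]

lemma Pasym_eq_one_sub_Psym : Pasym d = 1 - Psym d := by
  simp only [Pasym, Psym]
  module

lemma isStarProjection_Pasym : IsStarProjection (Pasym d) :=
  Pasym_eq_one_sub_Psym ▸ isStarProjection_Psym.one_sub

lemma trace_mul_Psym (K : Matrix (Fin d × Fin d) (Fin d × Fin d) ℂ) :
    (K * Psym d).trace = (K.trace + (K * swapMat d).trace) / 2 := by
  simp only [Psym, Matrix.mul_smul, mul_add, mul_one, trace_smul, trace_add, smul_eq_mul]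
  ring

lemma trace_mul_Pasym (K : Matrix (Fin d × Fin d) (Fin d × Fin d) ℂ) :
    (K * Pasym d).trace = (K.trace - (K * swapMat d).trace) / 2 := by
  simp only [Pasym, Matrix.mul_smul, mul_sub, mul_one, trace_smul, trace_sub, smul_eq_mul]
  ring

end Symmetrizers

lemma omegaConj_eq {d : ℕ} (ψ : Fin d → ℂ) :
    OmegaConj ψ = ((d : ℂ) * (d + 1))⁻¹ • kronAssoc (1 + (outer ψ)ᵀ) (Psym d)
      + ((d : ℂ) * (d - 1))⁻¹ • kronAssoc (1 - (outer ψ)ᵀ) (Pasym d) := by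
  ext x y
  simp only [OmegaConj, Matrix.add_apply, Matrix.smul_apply, kronAssoc_apply, smul_eq_mul]
  ring

lemma kronAssoc_one_sub_eq {α : Type*} [DecidableEq α] {d : ℕ} (a b : ℂ) (Q : Matrix α α ℂ) :
    kronAssoc ((2 * a) • Q + b • (1 - Q)) (1 : Matrix (Fin d × Fin d) (Fin d × Fin d) ℂ)
        - (a • kronAssoc (1 + Q) (Psym d) + b • kronAssoc (1 - Q) (Pasym d))
      = (b - a) • kronAssoc (1 - Q) (Psym d) + (2 * a) • kronAssoc Q (Pasym d) := by
  rw [show (1 : Matrix (Fin d × Fin d) (Fin d × Fin d) ℂ) = Psym d + Pasym d by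
    rw [Pasym_eq_one_sub_Psym, add_sub_cancel]]
  ext x y
  simp only [kronAssoc_apply, Matrix.add_apply, Matrix.sub_apply, Matrix.smul_apply, smul_eq_mul]
  ring

lemma mul_add_mul_one_sub_le {R : Type*} [Ring R] [PartialOrder R] [IsOrderedRing R]
    {x y m t : R} (hx : x ≤ m) (hy : y ≤ m) (ht : 0 ≤ t) (ht' : 0 ≤ 1 - t) :
    x * t + y * (1 - t) ≤ m :=
  calc x * t + y * (1 - t) ≤ m * t + m * (1 - t) :=
        add_le_add (mul_le_mul_of_nonneg_right hx ht) (mul_le_mul_of_nonneg_right hy ht')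
    _ = m := by rw [← mul_add, add_sub_cancel, mul_one]

lemma ite_eq_max_div {d : ℕ} (hd : 2 ≤ d) :
    (if d = 2 then 1 else 2 / ((d : ℝ) + 1)) = max (2 / ((d : ℝ) + 1)) (1 / ((d : ℝ) - 1)) := by
  split_ifs with h
  · subst h; norm_num
  · have hd3 : (3 : ℝ) ≤ d := by exact_mod_cast (show 3 ≤ d by omega)
    refine (max_eq_left ?_).symm
    rw [div_le_div_iff₀ (by linarith) (by linarith)]
    linarith

lemma posSemidef_kronAssoc_sub_omegaConj {d : ℕ} (hd : 2 ≤ d) {ψ : Fin d → ℂ}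
    (hψ : star ψ ⬝ᵥ ψ = 1) :
    (kronAssoc ((2 * ((d : ℂ) * (d + 1))⁻¹) • (outer ψ)ᵀ
        + ((d : ℂ) * (d - 1))⁻¹ • (1 - (outer ψ)ᵀ)) 1 - OmegaConj ψ).PosSemidef := by
  have hQ := (isStarProjection_outer hψ).transpose
  have hdR : (2 : ℝ) ≤ d := by exact_mod_cast hd
  have ha : ((d : ℂ) * (d + 1))⁻¹ = (((d : ℝ) * (d + 1))⁻¹ : ℝ) := by push_cast; rfl
  have hb : ((d : ℂ) * (d - 1))⁻¹ = (((d : ℝ) * (d - 1))⁻¹ : ℝ) := by push_cast; rfl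
  have hab : ((d : ℝ) * (d + 1))⁻¹ ≤ ((d : ℝ) * (d - 1))⁻¹ :=
    inv_anti₀ (by nlinarith) (by nlinarith)
  rw [omegaConj_eq, kronAssoc_one_sub_eq, ha, hb]
  exact ((hQ.one_sub.posSemidef.kronAssoc isStarProjection_Psym.posSemidef).smul
      (sub_nonneg.mpr (Complex.real_le_real.mpr hab))).add
    ((hQ.posSemidef.kronAssoc isStarProjection_Pasym.posSemidef).smul
      (mul_nonneg zero_le_two (Complex.zero_le_real.mpr (by positivity))))

lemma trace_mul_omegaConj_le {d : ℕ} (hd : 2 ≤ d) {ψ : Fin d → ℂ} (hψ : star ψ ⬝ᵥ ψ = 1)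
    {S : Matrix ((Fin d × Fin d) × Fin d) ((Fin d × Fin d) × Fin d) ℂ} (hS : IsSuperchannel S) :
    (S * OmegaConj ψ).trace ≤ (((if d = 2 then 1 else 2 / ((d : ℝ) + 1)) : ℝ) : ℂ) := by
  obtain ⟨hS, σ, hσ, hσtr, hptr⟩ := hS
  have hQ := (isStarProjection_outer hψ).transpose
  set t := (σ * (outer ψ)ᵀ).trace
  have ht : 0 ≤ t := hσ.trace_mul_nonneg hQ.posSemidef
  have ht' : 0 ≤ 1 - t := by
    simpa [mul_sub, trace_sub, hσtr] using hσ.trace_mul_nonneg hQ.one_sub.posSemidef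
  have hd₀ : (d : ℂ) ≠ 0 := by exact_mod_cast (show d ≠ 0 by omega)
  have hd₁ : (d : ℂ) + 1 ≠ 0 := by exact_mod_cast (show d + 1 ≠ 0 by omega)
  have hd₁' : (d : ℂ) - 1 ≠ 0 := by
    rw [sub_ne_zero]; exact_mod_cast (show d ≠ 1 by omega)
  rw [ite_eq_max_div hd]
  calc (S * OmegaConj ψ).trace
      ≤ (S * kronAssoc ((2 * ((d : ℂ) * (d + 1))⁻¹) • (outer ψ)ᵀ
          + ((d : ℂ) * (d - 1))⁻¹ • (1 - (outer ψ)ᵀ)) 1).trace :=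
        hS.trace_mul_le_trace_mul (posSemidef_kronAssoc_sub_omegaConj hd hψ)
    _ = ((2 / ((d : ℝ) + 1) : ℝ) : ℂ) * t + ((1 / ((d : ℝ) - 1) : ℝ) : ℂ) * (1 - t) := by
        rw [trace_mul_kronAssoc_one hptr]
        simp only [Matrix.mul_add, Matrix.mul_sub, Matrix.mul_smul, mul_one, trace_add, trace_sub,
          trace_smul, smul_eq_mul, hσtr, Fintype.card_fin, t]
        push_cast
        field_simp
    _ ≤ _ := mul_add_mul_one_sub_le (Complex.real_le_real.mpr (le_max_left _ _))
        (Complex.real_le_real.mpr (le_max_right _ _)) ht ht'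

section ChoiProj

variable {d : ℕ}

lemma ptrRight_choiProj (V : Matrix (Fin d) (Fin d) ℂ) : ptrRight (choiProj V) = (Vᴴ * V)ᵀ := by
  ext i j
  simp [ptrRight, choiProj, outer, choiVec, vecMulVec_apply, mul_apply, mul_comm]

lemma trace_choiProj (V : Matrix (Fin d) (Fin d) ℂ) : (choiProj V).trace = (V * Vᴴ).trace := by
  simp only [trace, choiProj, outer, diag_apply, Fintype.sum_prod_type, mul_apply,
    conjTranspose_apply, RCLike.star_def]
  exact Finset.sum_comm

lemma trace_choiProj_mul_swapMat (V : Matrix (Fin d) (Fin d) ℂ) :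
    (choiProj V * swapMat d).trace = (V * mconj V).trace := by
  simp only [trace, choiProj, outer, diag_apply, mul_apply, swapMat, ite_and, mul_ite, mul_one,
    mul_zero, Fintype.sum_prod_type, Finset.sum_ite_irrel, Finset.sum_ite_eq', Finset.mem_univ,
    if_true, Finset.sum_const_zero, mconj, map_apply]
  exact Finset.sum_comm

lemma isSuperchannel_kronAssoc_choiProj {ρ : Matrix (Fin d) (Fin d) ℂ} (hρ : ρ.PosSemidef)
    (hρ₁ : ρ.trace = 1) {V : Matrix (Fin d) (Fin d) ℂ} (hV : V ∈ unitaryGroup (Fin d) ℂ) :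
    IsSuperchannel (kronAssoc ρ (choiProj V)) := by
  refine ⟨hρ.kronAssoc (posSemidef_vecMulVec_self_star _), ρ, hρ, hρ₁, ?_⟩
  rw [ptrRight_kronAssoc, ptrRight_choiProj, ← star_eq_conjTranspose,
    mem_unitaryGroup_iff'.mp hV, transpose_one]

lemma trace_kronAssoc_choiProj_mul_omegaConj (ψ : Fin d → ℂ) (ρ : Matrix (Fin d) (Fin d) ℂ)
    {V : Matrix (Fin d) (Fin d) ℂ} (hV : V ∈ unitaryGroup (Fin d) ℂ) :
    (kronAssoc ρ (choiProj V) * OmegaConj ψ).trace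
      = ((d : ℂ) * (d + 1))⁻¹ * (ρ * (1 + (outer ψ)ᵀ)).trace * ((d + (V * mconj V).trace) / 2)
        + ((d : ℂ) * (d - 1))⁻¹ * (ρ * (1 - (outer ψ)ᵀ)).trace
          * ((d - (V * mconj V).trace) / 2) := by
  rw [omegaConj_eq, Matrix.mul_add, Matrix.mul_smul, Matrix.mul_smul, trace_add, trace_smul,
    trace_smul, kronAssoc_mul, kronAssoc_mul, trace_kronAssoc, trace_kronAssoc, trace_mul_Psym,
    trace_mul_Pasym, trace_choiProj_mul_swapMat, trace_choiProj, ← star_eq_conjTranspose,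
    mem_unitaryGroup_iff.mp hV, trace_one, Fintype.card_fin, smul_eq_mul, smul_eq_mul]
  ring

end ChoiProj

lemma trace_kronAssoc_choiProj_one_mul_omegaConj {d : ℕ} (hd : d ≠ 0) {ψ : Fin d → ℂ}
    (hψ : star ψ ⬝ᵥ ψ = 1) :
    (kronAssoc (outer ψ)ᵀ (choiProj 1) * OmegaConj ψ).trace = ((2 / ((d : ℝ) + 1) : ℝ) : ℂ) := by
  have hQ := (isStarProjection_outer hψ).transpose
  have hd₀ : (d : ℂ) ≠ 0 := by exact_mod_cast hd
  have hd₁ : (d : ℂ) + 1 ≠ 0 := by exact_mod_cast (show d + 1 ≠ 0 by omega)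
  have hQ₁ : (outer ψ)ᵀ.trace = 1 := by rw [trace_transpose, trace_outer, hψ]
  rw [trace_kronAssoc_choiProj_mul_omegaConj ψ _ (one_mem _), Matrix.mul_add, Matrix.mul_sub,
    mul_one, hQ.isIdempotentElem.eq, trace_add, sub_self, trace_zero, hQ₁, mconj,
    Matrix.map_one _ (map_zero _) (map_one _), one_mul, trace_one, Fintype.card_fin]
  push_cast
  field_simp
  ring

lemma rotation_mem_unitaryGroup : !![0, -1; 1, 0] ∈ unitaryGroup (Fin 2) ℂ := by
  rw [mem_unitaryGroup_iff, star_eq_conjTranspose]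
  ext i j
  fin_cases i <;> fin_cases j <;> simp [mul_apply, conjTranspose_apply, Fin.sum_univ_two]

lemma trace_outer_rotation (ψ : Fin 2 → ℂ) : (outer ![-ψ 1, ψ 0]).trace = star ψ ⬝ᵥ ψ := by
  simp [trace_outer, dotProduct, Fin.sum_univ_two, add_comm]

lemma trace_kronAssoc_choiProj_rotation_mul_omegaConj {ψ : Fin 2 → ℂ} (hψ : star ψ ⬝ᵥ ψ = 1) :
    (kronAssoc (outer ![-ψ 1, ψ 0]) (choiProj !![0, -1; 1, 0]) * OmegaConj ψ).trace = 1 := by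
  have hYY : (!![0, -1; 1, 0] * mconj !![0, -1; 1, 0] : Matrix (Fin 2) (Fin 2) ℂ).trace = -2 := by
    simp only [trace_fin_two, mul_apply, Fin.sum_univ_two, mconj, map_apply]
    norm_num
  have hρQ : (outer ![-ψ 1, ψ 0] * (outer ψ)ᵀ).trace = 0 := by
    have hχψ : star ![-ψ 1, ψ 0] ⬝ᵥ star ψ = 0 := by
      simp [dotProduct, Fin.sum_univ_two, mul_comm]
    rw [outer, outer, transpose_vecMulVec, vecMulVec_mul_vecMulVec, hχψ, zero_smul,
      vecMulVec_zero, trace_zero]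
  rw [trace_kronAssoc_choiProj_mul_omegaConj ψ _ rotation_mem_unitaryGroup, hYY, Matrix.mul_add,
    Matrix.mul_sub, mul_one, trace_add, trace_sub, trace_outer_rotation, hψ, hρQ]
  norm_num

/-- **Optimal deterministic (approximate) unitary complex conjugation on a known
pure state, single call.** The maximum of `Tr(S Ω)` over single-call deterministic
superchannels `S` is `1` if `d = 2` and `2/(d+1)` if `d > 2`, and it is attained. -/
theorem deterministic_conjugation_optimal_fidelity
    (d : ℕ) (hd : 2 ≤ d) (ψ : Fin d → ℂ) (hψ : star ψ ⬝ᵥ ψ = 1) :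
    IsGreatest
      {r : ℝ |
        ∃ S : Matrix ((Fin d × Fin d) × Fin d) ((Fin d × Fin d) × Fin d) ℂ,
          IsSuperchannel S ∧ (S * OmegaConj ψ).trace = (r : ℂ)}
      (if d = 2 then (1 : ℝ) else 2 / ((d : ℝ) + 1)) := by
  refine ⟨?_, fun r ⟨S, hS, hr⟩ => ?_⟩
  · split_ifs with hd2
    · subst hd2
      exact ⟨kronAssoc (outer ![-ψ 1, ψ 0]) (choiProj !![0, -1; 1, 0]),
        isSuperchannel_kronAssoc_choiProj (posSemidef_vecMulVec_self_star _)
          ((trace_outer_rotation ψ).trans hψ) rotation_mem_unitaryGroup,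
        (trace_kronAssoc_choiProj_rotation_mul_omegaConj hψ).trans Complex.ofReal_one.symm⟩
    · exact ⟨_, isSuperchannel_kronAssoc_choiProj
        (isStarProjection_outer hψ).transpose.posSemidef
        (by rw [trace_transpose, trace_outer, hψ]) (one_mem _),
        trace_kronAssoc_choiProj_one_mul_omegaConj (by omega) hψ⟩
  · exact Complex.real_le_real.mp (hr ▸ trace_mul_omegaConj_le hd hψ hS)
end
end

section
/- Fix integers d ≥ 2 and k ≥ 1, a real number p, and a unit vector ψ ∈ ℂ^d. Let S be any complex matrix on (ℂ^d)^{⊗k}_I ⊗ (ℂ^d)^{⊗k}_O ⊗ ℂ^d_F that commutes with U^{⊗k} ⊗ 1_O ⊗ U̅ for every U ∈ SU(d) (U^{⊗k} acting on the I factors, the identity on the O factors, and U̅ on the F factor). If S ⋆ 1^{⊗k} = p · |ψ⟩⟨ψ| (its action on the identity channel), then S ⋆ U^{⊗k} = p · Uᵀ|ψ⟩⟨ψ|U̅ for every U ∈ SU(d). That is, a covariant protocol that transposes the identity channel onto ψ with probability p necessarily transposes every unitary channel onto ψ with the same probability. -/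
open Matrix Kronecker BigOperators ComplexOrder

noncomputable section

/-- `(|U⟩⟩⟨⟨U|)^{⊗k}`, where the `j`-th copy acts on the `j`-th factor of `I`
and the `j`-th factor of `O`; `(ℂ^d)^{⊗k}` is indexed by `Fin k → Fin d`. -/
def choiProjK {d : ℕ} (k : ℕ) (U : Matrix (Fin d) (Fin d) ℂ) :
    Matrix ((Fin k → Fin d) × (Fin k → Fin d)) ((Fin k → Fin d) × (Fin k → Fin d)) ℂ :=
  fun x y => ∏ j, choiProj U (x.1 j, x.2 j) (y.1 j, y.2 j)

/-- Action `S ⋆ U^{⊗k} := Tr_{IO}[ S · ((|U̅⟩⟩⟨⟨U̅|)^{⊗k}_{IO} ⊗ 1_F) ]` of a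
parallel `k`-call supermap on the unitary channel given by `U`. -/
def actK {d k : ℕ}
    (S : Matrix (((Fin k → Fin d) × (Fin k → Fin d)) × Fin d)
        (((Fin k → Fin d) × (Fin k → Fin d)) × Fin d) ℂ)
    (U : Matrix (Fin d) (Fin d) ℂ) : Matrix (Fin d) (Fin d) ℂ :=
  ptrLeft (S * (choiProjK k (mconj U) ⊗ₖ (1 : Matrix (Fin d) (Fin d) ℂ)))

/-- A parallel `k`-call probabilistic protocol: `0 ≤ S ≤ S_ch` with
`Tr_F(S_ch) = σ ⊗ 1_O`, `σ ≥ 0` on `(ℂ^d)^{⊗k}`, `Tr σ = 1`. -/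
def IsProtocolK {d k : ℕ}
    (S Sch : Matrix (((Fin k → Fin d) × (Fin k → Fin d)) × Fin d)
        (((Fin k → Fin d) × (Fin k → Fin d)) × Fin d) ℂ) : Prop :=
  S.PosSemidef ∧ (Sch - S).PosSemidef ∧
    ∃ σ : Matrix (Fin k → Fin d) (Fin k → Fin d) ℂ, σ.PosSemidef ∧ σ.trace = 1 ∧
      ptrRight Sch = σ ⊗ₖ (1 : Matrix (Fin k → Fin d) (Fin k → Fin d) ℂ)

/-- `U^{⊗k}` on `(ℂ^d)^{⊗k}` (indexed by `Fin k → Fin d`). -/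
def UkMat {d : ℕ} (k : ℕ) (U : Matrix (Fin d) (Fin d) ℂ) :
    Matrix (Fin k → Fin d) (Fin k → Fin d) ℂ :=
  fun i i' => ∏ j, U (i j) (i' j)

/-- The symmetry operator `U^{⊗k}_I ⊗ 1_O ⊗ U̅_F`. -/
def symTrans {d : ℕ} (k : ℕ) (U : Matrix (Fin d) (Fin d) ℂ) :
    Matrix (((Fin k → Fin d) × (Fin k → Fin d)) × Fin d)
      (((Fin k → Fin d) × (Fin k → Fin d)) × Fin d) ℂ :=
  (UkMat k U ⊗ₖ (1 : Matrix (Fin k → Fin d) (Fin k → Fin d) ℂ)) ⊗ₖ mconj U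


section Aux
variable {d k : ℕ}

lemma ukmat_conjTranspose (U : Matrix (Fin d) (Fin d) ℂ) :
    (UkMat k U)ᴴ = UkMat k Uᴴ := by
  ext x y
  simp [UkMat, Matrix.conjTranspose_apply, map_prod]

lemma ukmat_mul (A B : Matrix (Fin d) (Fin d) ℂ) :
    UkMat k A * UkMat k B = UkMat k (A * B) := by
  ext x y
  simp only [UkMat, Matrix.mul_apply]
  rw [Fintype.prod_sum (fun j m => A (x j) m * B m (y j))]
  exact Finset.sum_congr rfl fun g _ => (Finset.prod_mul_distrib).symm

lemma ukmat_one : UkMat k (1 : Matrix (Fin d) (Fin d) ℂ) = 1 := by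
  ext x y
  simp only [UkMat, Matrix.one_apply]
  rw [Finset.prod_boole]
  simp [funext_iff]

lemma kron_conjT {α β : Type*} [Fintype α] [Fintype β]
    (A : Matrix α α ℂ) (B : Matrix β β ℂ) : (A ⊗ₖ B)ᴴ = Aᴴ ⊗ₖ Bᴴ := by
  ext ⟨a, b⟩ ⟨c, e⟩
  simp [Matrix.conjTranspose_apply, Matrix.kroneckerMap_apply, mul_comm]

lemma mconj_mul (A B : Matrix (Fin d) (Fin d) ℂ) :
    mconj (A * B) = mconj A * mconj B := by
  simp [mconj, Matrix.map_mul]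

lemma mconj_one : mconj (1 : Matrix (Fin d) (Fin d) ℂ) = 1 := by
  simp [mconj]

end Aux
section Aux2
variable {d k : ℕ}

lemma choiProjK_one_apply (a b c e : Fin k → Fin d) :
    choiProjK k (1 : Matrix (Fin d) (Fin d) ℂ) (a, b) (c, e) =
      (if a = b then 1 else 0) * (if c = e then 1 else 0) := by
  simp only [choiProjK, choiProj, outer, choiVec, Matrix.vecMulVec_apply, Pi.star_apply,
    Matrix.one_apply, apply_ite (star : ℂ → ℂ), star_one, star_zero]
  rw [Finset.prod_mul_distrib, Finset.prod_boole, Finset.prod_boole]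
  simp [funext_iff, eq_comm]

lemma choiProjK_conj (U : Matrix (Fin d) (Fin d) ℂ) :
    choiProjK k (mconj U) =
      (UkMat k U ⊗ₖ (1 : Matrix (Fin k → Fin d) (Fin k → Fin d) ℂ))ᴴ *
        choiProjK k (1 : Matrix (Fin d) (Fin d) ℂ) *
        (UkMat k U ⊗ₖ (1 : Matrix (Fin k → Fin d) (Fin k → Fin d) ℂ)) := by
  ext ⟨x, o⟩ ⟨y, o'⟩
  have lhs : choiProjK k (mconj U) (x, o) (y, o') =
      star (UkMat k U o x) * UkMat k U o' y := by
    simp only [choiProjK, choiProj, outer, choiVec, Matrix.vecMulVec_apply, Pi.star_apply,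
      mconj, Matrix.map_apply, UkMat, star_star, starRingEnd_apply]
    rw [Finset.prod_mul_distrib]
    congr 1
    exact (map_prod (starRingEnd ℂ) _ _).symm
  rw [lhs]
  simp only [Matrix.mul_apply, Matrix.conjTranspose_apply, Matrix.kroneckerMap_apply,
    Fintype.sum_prod_type, choiProjK_one_apply, Matrix.one_apply, star_mul',
    apply_ite (star : ℂ → ℂ), star_one, star_zero, mul_ite, ite_mul, mul_zero, zero_mul,
    mul_one, one_mul, Finset.sum_ite_eq, Finset.sum_ite_eq', Finset.mem_univ, if_true,
    Finset.sum_ite_irrel, Finset.sum_const_zero]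

end Aux2
section Aux3

lemma ptrLeft_conj_right {α β : Type*} [Fintype α] [Fintype β] [DecidableEq α] [DecidableEq β]
    (B : Matrix β β ℂ) (N : Matrix (α × β) (α × β) ℂ) :
    ptrLeft (((1 : Matrix α α ℂ) ⊗ₖ B)ᴴ * N * ((1 : Matrix α α ℂ) ⊗ₖ B)) =
      Bᴴ * ptrLeft N * B := by
  ext f f'
  simp only [ptrLeft, Matrix.mul_apply, Matrix.conjTranspose_apply, Matrix.kroneckerMap_apply,
    Fintype.sum_prod_type, Matrix.one_apply, star_mul', apply_ite (star : ℂ → ℂ), star_one,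
    star_zero, mul_ite, ite_mul, mul_zero, zero_mul, mul_one, one_mul,
    Finset.sum_ite_eq, Finset.sum_ite_eq', Finset.mem_univ, if_true,
    Finset.sum_ite_irrel, Finset.sum_const_zero, Finset.mul_sum, Finset.sum_mul]
  rw [Finset.sum_comm]
  refine Finset.sum_congr rfl fun y _ => ?_
  rw [Finset.sum_comm]

lemma ptrLeft_conj_left {α β : Type*} [Fintype α] [Fintype β] [DecidableEq α] [DecidableEq β]
    (A : Matrix α α ℂ) (N : Matrix (α × β) (α × β) ℂ) (hA : A * Aᴴ = 1) :
    ptrLeft ((A ⊗ₖ (1 : Matrix β β ℂ))ᴴ * N * (A ⊗ₖ (1 : Matrix β β ℂ))) = ptrLeft N := by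
  have hAx : ∀ y y' : α, (∑ x, A y' x * (starRingEnd ℂ) (A y x)) = if y' = y then (1:ℂ) else 0 := by
    intro y y'
    have := congrFun (congrFun hA y') y
    simpa [Matrix.mul_apply, Matrix.conjTranspose_apply, Matrix.one_apply] using this
  ext f f'
  simp only [ptrLeft, Matrix.mul_apply, Matrix.conjTranspose_apply, Matrix.kroneckerMap_apply,
    Fintype.sum_prod_type, Matrix.one_apply, star_mul', apply_ite (star : ℂ → ℂ), star_one,
    star_zero, mul_ite, ite_mul, mul_zero, zero_mul, mul_one, one_mul,
    Finset.sum_ite_eq, Finset.sum_ite_eq', Finset.mem_univ, if_true,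
    Finset.sum_ite_irrel, Finset.sum_const_zero, Finset.mul_sum, Finset.sum_mul]
  rw [Finset.sum_comm]
  refine Eq.trans (Finset.sum_congr rfl fun x1 _ => Finset.sum_comm) ?_
  calc ∑ x1, ∑ y, ∑ x, star (A y x) * N (y, f) (x1, f') * A x1 x
      = ∑ x1, ∑ y, N (y, f) (x1, f') * ∑ x, A x1 x * (starRingEnd ℂ) (A y x) := by
        refine Finset.sum_congr rfl fun x1 _ => Finset.sum_congr rfl fun y _ => ?_
        rw [Finset.mul_sum]
        exact Finset.sum_congr rfl fun x _ => by rw [starRingEnd_apply]; ring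
    _ = ∑ a, N (a, f) (a, f') := by simp [hAx]

end Aux3

lemma ptrLeft_conj {α β : Type*} [Fintype α] [Fintype β] [DecidableEq α] [DecidableEq β]
    (A : Matrix α α ℂ) (B : Matrix β β ℂ) (M : Matrix (α × β) (α × β) ℂ)
    (hA : A * Aᴴ = 1) :
    ptrLeft ((A ⊗ₖ B)ᴴ * M * (A ⊗ₖ B)) = Bᴴ * ptrLeft M * B := by
  have hAB : A ⊗ₖ B = (A ⊗ₖ (1 : Matrix β β ℂ)) * ((1 : Matrix α α ℂ) ⊗ₖ B) := by
    rw [← Matrix.mul_kronecker_mul, mul_one, one_mul]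
  rw [hAB, Matrix.conjTranspose_mul]
  have : ((1 : Matrix α α ℂ) ⊗ₖ B)ᴴ * (A ⊗ₖ (1 : Matrix β β ℂ))ᴴ * M *
      ((A ⊗ₖ (1 : Matrix β β ℂ)) * ((1 : Matrix α α ℂ) ⊗ₖ B)) =
      ((1 : Matrix α α ℂ) ⊗ₖ B)ᴴ *
        ((A ⊗ₖ (1 : Matrix β β ℂ))ᴴ * M * (A ⊗ₖ (1 : Matrix β β ℂ))) *
        ((1 : Matrix α α ℂ) ⊗ₖ B) := by noncomm_ring
  rw [this, ptrLeft_conj_right, ptrLeft_conj_left A M hA]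

lemma mconj_conjT {d : ℕ} (U : Matrix (Fin d) (Fin d) ℂ) : (mconj U)ᴴ = Uᵀ := by
  ext i j
  simp [mconj, Matrix.conjTranspose_apply]

lemma mconj_eq_conjT_transpose {d : ℕ} (U : Matrix (Fin d) (Fin d) ℂ) : mconj Uᴴ = Uᵀ := by
  ext i j
  simp [mconj, Matrix.conjTranspose_apply]


/-- **Covariant protocols are determined by their action on the identity channel
(transposition).** If `S` commutes with `U^{⊗k} ⊗ 1_O ⊗ U̅` for every `U ∈ SU(d)`
and `S ⋆ 1^{⊗k} = p·|ψ⟩⟨ψ|`, then `S ⋆ U^{⊗k} = p·Uᵀ|ψ⟩⟨ψ|U̅` for every `U ∈ SU(d)`. -/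
theorem covariant_action_determined_by_identity
    (d k : ℕ) (hd : 2 ≤ d) (hk : 1 ≤ k) (p : ℝ)
    (ψ : Fin d → ℂ) (hψ : star ψ ⬝ᵥ ψ = 1)
    (S : Matrix (((Fin k → Fin d) × (Fin k → Fin d)) × Fin d)
        (((Fin k → Fin d) × (Fin k → Fin d)) × Fin d) ℂ)
    (hcomm : ∀ U : Matrix (Fin d) (Fin d) ℂ, U ∈ Matrix.specialUnitaryGroup (Fin d) ℂ →
      S * symTrans k U = symTrans k U * S)
    (hid : actK S (1 : Matrix (Fin d) (Fin d) ℂ) = (p : ℂ) • outer ψ) :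
    ∀ U : Matrix (Fin d) (Fin d) ℂ, U ∈ Matrix.specialUnitaryGroup (Fin d) ℂ →
      actK S U = (p : ℂ) • (Uᵀ * outer ψ * mconj U) := by
  intro U hU
  obtain ⟨hUu, -⟩ := (Matrix.mem_specialUnitaryGroup_iff).mp hU
  have hU1 : U * Uᴴ = 1 := (Matrix.mem_unitaryGroup_iff).mp hUu
  have hU2 : Uᴴ * U = 1 := (Matrix.mem_unitaryGroup_iff').mp hUu
  set V : Matrix (Fin k → Fin d) (Fin k → Fin d) ℂ := UkMat k U with hV
  set A : Matrix ((Fin k → Fin d) × (Fin k → Fin d)) ((Fin k → Fin d) × (Fin k → Fin d)) ℂ :=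
    V ⊗ₖ (1 : Matrix (Fin k → Fin d) (Fin k → Fin d) ℂ) with hA
  set C := choiProjK k (1 : Matrix (Fin d) (Fin d) ℂ) with hC
  set W := symTrans k U with hW
  have hAH : Aᴴ = Vᴴ ⊗ₖ (1 : Matrix (Fin k → Fin d) (Fin k → Fin d) ℂ) := by
    rw [hA, kron_conjT, Matrix.conjTranspose_one]
  have hAA : A * Aᴴ = 1 := by
    rw [hAH, hA, ← Matrix.mul_kronecker_mul, one_mul, hV, ukmat_conjTranspose,
      ukmat_mul, hU1, ukmat_one, Matrix.one_kronecker_one]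
  have hAA' : Aᴴ * A = 1 := by
    rw [hAH, hA, ← Matrix.mul_kronecker_mul, one_mul, hV, ukmat_conjTranspose,
      ukmat_mul, hU2, ukmat_one, Matrix.one_kronecker_one]
  have hmU1 : Uᵀ * mconj U = 1 := by
    rw [← mconj_eq_conjT_transpose, ← mconj_mul, hU2, mconj_one]
  have hmU2 : mconj U * Uᵀ = 1 := by
    rw [← mconj_eq_conjT_transpose, ← mconj_mul, hU1, mconj_one]
  have hWeq : W = A ⊗ₖ mconj U := rfl
  have hWH : Wᴴ = Aᴴ ⊗ₖ Uᵀ := by rw [hWeq, kron_conjT, mconj_conjT]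
  have hWW : Wᴴ * W = 1 := by
    rw [hWH, hWeq, ← Matrix.mul_kronecker_mul, hAA', hmU1, Matrix.one_kronecker_one]
  have hWW' : W * Wᴴ = 1 := by
    rw [hWH, hWeq, ← Matrix.mul_kronecker_mul, hAA]
    rw [← mconj_eq_conjT_transpose, ← mconj_mul, hU1, mconj_one, Matrix.one_kronecker_one]
  have hSW : S * W = W * S := hcomm U hU
  have hSWH : S * Wᴴ = Wᴴ * S := by
    calc S * Wᴴ = (Wᴴ * W) * (S * Wᴴ) := by rw [hWW, one_mul]
      _ = Wᴴ * ((W * S) * Wᴴ) := by noncomm_ring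
      _ = Wᴴ * ((S * W) * Wᴴ) := by rw [hSW]
      _ = (Wᴴ * S) * (W * Wᴴ) := by noncomm_ring
      _ = Wᴴ * S := by rw [hWW', mul_one]
  have hkey : choiProjK k (mconj U) ⊗ₖ (1 : Matrix (Fin d) (Fin d) ℂ) =
      Wᴴ * (C ⊗ₖ (1 : Matrix (Fin d) (Fin d) ℂ)) * W := by
    have h1 : (1 : Matrix (Fin d) (Fin d) ℂ) = Uᵀ * 1 * mconj U := by
      rw [mul_one, hmU1]
    rw [choiProjK_conj U, ← hA, ← hC]
    conv_lhs => rw [h1]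
    rw [Matrix.mul_kronecker_mul, Matrix.mul_kronecker_mul, hWH, hWeq]
  have hact1 : actK S (1 : Matrix (Fin d) (Fin d) ℂ) =
      ptrLeft (S * (C ⊗ₖ (1 : Matrix (Fin d) (Fin d) ℂ))) := by
    rw [actK, mconj_one, hC]
  have hmain : actK S U = Uᵀ * actK S (1 : Matrix (Fin d) (Fin d) ℂ) * mconj U := by
    rw [actK, hkey]
    have : S * (Wᴴ * (C ⊗ₖ (1 : Matrix (Fin d) (Fin d) ℂ)) * W) =
        Wᴴ * (S * (C ⊗ₖ (1 : Matrix (Fin d) (Fin d) ℂ))) * W := by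
      calc S * (Wᴴ * (C ⊗ₖ (1 : Matrix (Fin d) (Fin d) ℂ)) * W)
          = (S * Wᴴ) * (C ⊗ₖ (1 : Matrix (Fin d) (Fin d) ℂ)) * W := by noncomm_ring
        _ = (Wᴴ * S) * (C ⊗ₖ (1 : Matrix (Fin d) (Fin d) ℂ)) * W := by rw [hSWH]
        _ = Wᴴ * (S * (C ⊗ₖ (1 : Matrix (Fin d) (Fin d) ℂ))) * W := by noncomm_ring
    rw [this, hWeq, ptrLeft_conj A (mconj U) _ hAA, mconj_conjT, hact1]
  rw [hmain, hid]
  rw [Matrix.mul_smul, Matrix.smul_mul]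
end
end
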